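/- arXiv:1704.08546 — 4 statements merged into one kernel-verified Lean document; each statement's English description precedes it below -/
import Mathlib

section
/- Let T be a compact operator on a separable Hilbert space H and let (e_j)_{j∈J} be a Hilbert (orthonormal) basis of H indexed by a countable set J. For any finite subset I ⊂ J with |I| = n, the (n+1)-st singular value of T satisfies μ_{n+1}(T) ≤ Σ_{j ∈ J \ I} ‖T e_j‖. -/
/-!
Take `F = span {e_j : j ∈ I}`, of dimension `|I|`. A unit vector `w ∈ Fᗮ` expands as
`w = Σ_{j ∉ I} ⟪e_j, w⟫ e_j` with `|⟪e_j, w⟫| ≤ 1`, so `‖T w‖ ≤ Σ_{j ∉ I} ‖T e_j‖`, and the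
min-max formula for `μ_{|I|+1}(T)` with this `F` gives the bound.
-/

open scoped ENNReal

variable {H : Type*} [NormedAddCommGroup H] [InnerProductSpace ℂ H] [CompleteSpace H]

/-- The `(n+1)`-st singular value (approximation number) of an operator `T`, given by the
min-max principle: `μ_{n+1}(T) = inf_{dim F = n} sup_{w ∈ F^⊥, ‖w‖ = 1} ‖T w‖`. -/
noncomputable def singularValue (T : H →L[ℂ] H) (n : ℕ) : ℝ :=
  ⨅ F : {F : Submodule ℂ H // Module.finrank ℂ F = n},
    ⨆ w : {w : H // w ∈ (F : Submodule ℂ H)ᗮ ∧ ‖w‖ = 1}, ‖T (w : H)‖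

open scoped InnerProductSpace

theorem HilbertBasis.enorm_map_le_mul_tsum {ι 𝕜 E G : Type*} [RCLike 𝕜]
    [NormedAddCommGroup E] [InnerProductSpace 𝕜 E] [NormedAddCommGroup G] [NormedSpace 𝕜 G]
    (b : HilbertBasis ι 𝕜 E) (T : E →L[𝕜] G) {s : Set ι} {w : E}
    (hw : ∀ i ∉ s, ⟪b i, w⟫_𝕜 = 0) :
    ‖T w‖ₑ ≤ ‖w‖ₑ * ∑' i : s, ‖T (b i)‖ₑ := by
  have hT : HasSum (fun i => ⟪b i, w⟫_𝕜 • T (b i)) (T w) := by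
    simpa [b.repr_apply_apply] using T.hasSum (b.hasSum_repr w)
  have hTs : HasSum (fun i : s => ⟪b i, w⟫_𝕜 • T (b i)) (T w) :=
    (hasSum_subtype_iff_of_support_subset fun i hi =>
      by_contra fun his => hi (by simp [hw i his])).mpr hT
  rw [← hTs.tsum_eq, ← ENNReal.tsum_mul_left]
  -- in `ℝ≥0∞` the comparison test needs no summability of the majorant
  refine tsum_of_enorm_bounded ENNReal.summable.hasSum fun i => ?_
  have hcoeff : ‖⟪b i, w⟫_𝕜‖ ≤ ‖w‖ := by
    simpa [b.orthonormal.1 i] using norm_inner_le_norm (𝕜 := 𝕜) (b i) w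
  rw [enorm_smul]
  gcongr
  exact enorm_le_iff_norm_le.mpr hcoeff

theorem ofReal_singularValue_le {V : Type*} [NormedAddCommGroup V] [InnerProductSpace ℂ V]
    {T : V →L[ℂ] V} {n : ℕ} {F : Submodule ℂ V}
    (hF : Module.finrank ℂ F = n) {C : ℝ≥0∞} (hC : ∀ w ∈ Fᗮ, ‖w‖ = 1 → ‖T w‖ₑ ≤ C) :
    ENNReal.ofReal (singularValue T n) ≤ C := by
  rcases eq_or_ne C ⊤ with rfl | hC_top
  · exact le_top
  have hbdd : BddBelow (Set.range fun F : {F : Submodule ℂ V // Module.finrank ℂ F = n} =>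
      ⨆ w : {w : V // w ∈ (F : Submodule ℂ V)ᗮ ∧ ‖w‖ = 1}, ‖T (w : V)‖) :=
    ⟨0, Set.forall_mem_range.mpr fun _ => Real.iSup_nonneg fun _ => norm_nonneg _⟩
  rw [← ENNReal.ofReal_toReal hC_top]
  refine ENNReal.ofReal_le_ofReal
    (ciInf_le_of_le hbdd ⟨F, hF⟩ (Real.iSup_le ?_ ENNReal.toReal_nonneg))
  rintro ⟨w, hw, hw1⟩
  simpa using ENNReal.toReal_mono hC_top (hC w hw hw1)

theorem singularValue_le_tsum_norm_general (J : Type*)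
    (e : HilbertBasis J ℂ H) (T : H →L[ℂ] H) (I : Finset J) :
    ENNReal.ofReal (singularValue T I.card) ≤
      ∑' j : {j : J // j ∉ I}, (‖T (e (j : J))‖₊ : ℝ≥0∞) := by
  have hF : Module.finrank ℂ (Submodule.span ℂ (Set.range (e ∘ Subtype.val : I → H))) = I.card := by
    simpa using finrank_span_eq_card
      (e.orthonormal.linearIndependent.comp (Subtype.val : I → J) Subtype.val_injective)
  refine ofReal_singularValue_le hF fun w hw hw1 => ?_
  have hI : ∀ j ∉ ((I : Set J)ᶜ), ⟪e j, w⟫_ℂ = 0 := fun j hj =>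
    (Submodule.mem_orthogonal _ w).mp hw _ (Submodule.subset_span ⟨⟨j, not_not.mp hj⟩, rfl⟩)
  have hw_enorm : ‖w‖ₑ = 1 := by rw [← ofReal_norm, hw1, ENNReal.ofReal_one]
  have h := e.enorm_map_le_mul_tsum T hI
  rwa [hw_enorm, one_mul] at h

/-- For a compact operator `T` on a separable Hilbert space with orthonormal basis
`(e_j)_{j ∈ J}`, `J` countable, and any finite `I ⊆ J` with `|I| = n`, the `(n+1)`-st
singular value satisfies `μ_{n+1}(T) ≤ Σ_{j ∈ J \ I} ‖T e_j‖`. -/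
theorem singularValue_le_tsum_norm (J : Type*) [Countable J]
    (e : HilbertBasis J ℂ H) (T : H →L[ℂ] H)
    (hT : IsCompactOperator T) (I : Finset J) :
    ENNReal.ofReal (singularValue T I.card) ≤
      ∑' j : {j : J // j ∉ I}, (‖T (e (j : J))‖₊ : ℝ≥0∞) :=
  singularValue_le_tsum_norm_general J e T I
end

section
/- Let φ: [M₀, ∞) → ℝ⁺ be a C² function with φ'(x) > 0 on [M₀, ∞), and suppose sup_{x ≥ M₀} |φ''(x)/(φ'(x))³| ≤ C. Then for all M ≥ M₀, ∫_M^∞ e^{-φ(t)} dt ≤ e^{-φ(M)}/φ'(M) + C·e^{-φ(M)}. -/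
/-!
With `G = e^{-φ} / φ' + C e^{-φ}` one computes
`-G' = e^{-φ} + e^{-φ} (φ''/φ'² + C φ')`, and `|φ''/φ'³| ≤ C` makes the second summand
nonnegative. Hence `e^{-φ} ≤ -G'`, so `∫_M^N e^{-φ} ≤ G M - G N ≤ G M` for every `N ≥ M`,
and letting `N → ∞` bounds the improper integral by `G M`.
-/

open Set MeasureTheory Filter

theorem integral_Ioi_le_of_le_neg_deriv {f G G' : ℝ → ℝ} {a : ℝ}
    (hf : ∀ b, IntegrableOn f (Icc a b)) (hG : ContinuousOn G (Ici a))
    (hG' : ∀ x ∈ Ioi a, HasDerivAt G (G' x) x) (hfG : ∀ x ∈ Ioi a, f x ≤ -G' x)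
    (hG_nonneg : ∀ x ∈ Ici a, 0 ≤ G x) :
    ∫ x in Ioi a, f x ≤ G a := by
  by_cases hint : IntegrableOn f (Ioi a)
  · refine le_of_tendsto (intervalIntegral_tendsto_integral_Ioi a hint tendsto_id) ?_
    filter_upwards [eventually_ge_atTop a] with b hab
    show ∫ x in a..b, f x ≤ G a
    have hbound : ∫ x in a..b, f x ≤ -G b - -G a :=
      intervalIntegral.integral_le_sub_of_hasDeriv_right_of_le hab
        (hG.mono Icc_subset_Ici_self).neg
        (fun x hx => (hG' x hx.1).neg.hasDerivWithinAt) (hf b) (fun x hx => hfG x hx.1)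
    linarith [hG_nonneg b hab]
  · rw [integral_undef hint]
    exact hG_nonneg a self_mem_Ici

theorem hasDerivAt_exp_neg_div {φ φ' : ℝ → ℝ} {φ'' x : ℝ} (hφ : HasDerivAt φ (φ' x) x)
    (hφ' : HasDerivAt φ' φ'' x) (hx : φ' x ≠ 0) :
    HasDerivAt (fun t => Real.exp (-φ t) / φ' t)
      (-(Real.exp (-φ x) * (1 + φ'' / φ' x ^ 2))) x := by
  refine (hφ.neg.exp.div hφ' hx).congr_deriv ?_
  simp only [Pi.neg_apply]
  field_simp
  ring

theorem add_mul_nonneg_of_abs_div_pow_three_le {a b C : ℝ} (hb : 0 < b) (h : |a / b ^ 3| ≤ C) :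
    0 ≤ a / b ^ 2 + C * b := by
  have hab : a / b ^ 2 = a / b ^ 3 * b := by field_simp
  rw [hab, ← add_mul]
  exact mul_nonneg (by linarith [neg_abs_le (a / b ^ 3)]) hb.le

theorem ContDiffOn.continuousOn_deriv_Ici {f : ℝ → ℝ} {a : ℝ} (hf : ContDiffOn ℝ 1 f (Ici a))
    (hdiff : ∀ x ∈ Ici a, DifferentiableAt ℝ f x) : ContinuousOn (deriv f) (Ici a) :=
  (hf.continuousOn_derivWithin (uniqueDiffOn_Ici a) le_rfl).congr fun x hx =>
    ((hdiff x hx).derivWithin ((uniqueDiffOn_Ici a) x hx)).symm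

theorem ContDiffOn.hasDerivAt_deriv_Ioi {f : ℝ → ℝ} {a x : ℝ} (hf : ContDiffOn ℝ 2 f (Ici a))
    (hx : x ∈ Ioi a) : HasDerivAt (deriv f) (deriv (deriv f) x) x :=
  (((hf.mono Ioi_subset_Ici_self).deriv_of_isOpen isOpen_Ioi (m := 1) le_rfl).differentiableOn
    one_ne_zero x hx |>.differentiableAt (isOpen_Ioi.mem_nhds hx)).hasDerivAt

theorem integral_exp_neg_le_general (φ : ℝ → ℝ) (M₀ C : ℝ)
    (hC2 : ContDiffOn ℝ 2 φ (Ici M₀))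
    (hder : ∀ x ∈ Ici M₀, 0 < deriv φ x)
    (hratio : ∀ x ∈ Ici M₀, |deriv (deriv φ) x / (deriv φ x) ^ 3| ≤ C) :
    ∀ M, M₀ ≤ M →
      ∫ t in Ioi M, Real.exp (-φ t) ≤
        Real.exp (-φ M) / deriv φ M + C * Real.exp (-φ M) := by
  intro M hM
  have hC : 0 ≤ C := (abs_nonneg _).trans (hratio M₀ self_mem_Ici)
  have hIci : Ici M ⊆ Ici M₀ := Ici_subset_Ici.mpr hM
  have hIoi : Ioi M ⊆ Ioi M₀ := Ioi_subset_Ioi hM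
  have hφ : ∀ x ∈ Ici M₀, HasDerivAt φ (deriv φ x) x := fun x hx =>
    (differentiableAt_of_deriv_ne_zero (hder x hx).ne').hasDerivAt
  have hexp : ContinuousOn (fun t => Real.exp (-φ t)) (Ici M₀) := hC2.continuousOn.neg.rexp
  have hφ'cont : ContinuousOn (deriv φ) (Ici M₀) :=
    (hC2.of_le one_le_two).continuousOn_deriv_Ici fun x hx => (hφ x hx).differentiableAt
  refine integral_Ioi_le_of_le_neg_deriv
    (G := fun t => Real.exp (-φ t) / deriv φ t + C * Real.exp (-φ t))
    (G' := fun t => -(Real.exp (-φ t) * (1 + deriv (deriv φ) t / deriv φ t ^ 2))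
      + C * (Real.exp (-φ t) * -deriv φ t))
    (fun b => (hexp.mono (Icc_subset_Ici_self.trans hIci)).integrableOn_Icc)
    (((hexp.div hφ'cont fun x hx => (hder x hx).ne').add (hexp.const_smul C)).mono hIci)
    (fun x hx => ?_) (fun x hx => ?_) (fun x hx => ?_)
  · have hx₀ : x ∈ Ici M₀ := Ioi_subset_Ici_self (hIoi hx)
    exact (hasDerivAt_exp_neg_div (hφ x hx₀) (hC2.hasDerivAt_deriv_Ioi (hIoi hx))
      (hder x hx₀).ne').add ((hφ x hx₀).neg.exp.const_mul C)
  · have hx₀ : x ∈ Ici M₀ := Ioi_subset_Ici_self (hIoi hx)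
    have hcorr := add_mul_nonneg_of_abs_div_pow_three_le (hder x hx₀) (hratio x hx₀)
    nlinarith [mul_nonneg (Real.exp_pos (-φ x)).le hcorr]
  · have := hder x (hIci hx)
    positivity

/-- Integration-by-parts bound: if `φ` is `C²` on `[M₀, ∞)`, positive with `φ' > 0` there,
and `|φ''/(φ')³| ≤ C` on `[M₀, ∞)`, then for all `M ≥ M₀`,
`∫_M^∞ e^{-φ(t)} dt ≤ e^{-φ(M)}/φ'(M) + C·e^{-φ(M)}`. -/
theorem integral_exp_neg_le (φ : ℝ → ℝ) (M₀ C : ℝ)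
    (hC2 : ContDiffOn ℝ 2 φ (Ici M₀))
    (hpos : ∀ x ∈ Ici M₀, 0 < φ x)
    (hder : ∀ x ∈ Ici M₀, 0 < deriv φ x)
    (hratio : ∀ x ∈ Ici M₀, |deriv (deriv φ) x / (deriv φ x) ^ 3| ≤ C) :
    ∀ M, M₀ ≤ M →
      ∫ t in Ioi M, Real.exp (-φ t) ≤
        Real.exp (-φ M) / deriv φ M + C * Real.exp (-φ M) :=
  integral_exp_neg_le_general φ M₀ C hC2 hder hratio
end

section
/- Let φ: [M₀, ∞) → ℝ⁺ be C² with φ' > 0 and sup_{x ≥ M₀} |φ''(x)/(φ'(x))³| ≤ C. Then lim_{x→∞} e^{-φ(x)}/φ'(x) = 0 and lim_{x→∞} φ(x) = +∞. -/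
/-!
Put `f = φ'`. The hypothesis says that `(1 / f²)' = -2 f'/f³` is bounded, so `1 / f²` grows at
most linearly: `1 / f² ≤ P` with `P` affine of positive slope `B`. Hence `φ' = f ≥ 1 / √P`, and
integrating, `φ ≥ K + (2 / B) √P`. Both limits follow, since `√P → ∞` and
`e^{-φ} / f ≤ e^{-K} √P e^{-(2/B) √P}`.
-/

open Set Filter Topology

theorem HasDerivAt.inv_sq {f : ℝ → ℝ} {f' x : ℝ} (hf : HasDerivAt f f' x) (hx : f x ≠ 0) :
    HasDerivAt (fun y => (f y ^ 2)⁻¹) (-(2 * (f' / f x ^ 3))) x := by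
  refine ((hf.fun_pow 2).fun_inv (pow_ne_zero 2 hx)).congr_deriv ?_
  field_simp
  ring

theorem inv_sq_le_of_abs_deriv_div_cube_le {f : ℝ → ℝ} {a C : ℝ}
    (hf : ∀ x ∈ Ici a, DifferentiableAt ℝ f x) (hne : ∀ x ∈ Ici a, f x ≠ 0)
    (hC : ∀ x ∈ Ici a, |deriv f x / f x ^ 3| ≤ C) {x : ℝ} (hx : a ≤ x) :
    (f x ^ 2)⁻¹ ≤ (f a ^ 2)⁻¹ + 2 * C * (x - a) := by
  have hg : ∀ y ∈ Ici a, HasDerivAt (fun y => (f y ^ 2)⁻¹) (-(2 * (deriv f y / f y ^ 3))) y :=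
    fun y hy => (hf y hy).hasDerivAt.inv_sq (hne y hy)
  have hbound : ∀ y ∈ interior (Ici a), deriv (fun y => (f y ^ 2)⁻¹) y ≤ 2 * C := by
    intro y hy
    have hy : y ∈ Ici a := interior_subset hy
    rw [(hg y hy).deriv]
    linarith [neg_abs_le (deriv f y / f y ^ 3), hC y hy]
  have := (convex_Ici a).image_sub_le_mul_sub_of_deriv_le
    (fun y hy => (hg y hy).continuousAt.continuousWithinAt)
    (fun y hy => (hg y (interior_subset hy)).differentiableAt.differentiableWithinAt)
    hbound a self_mem_Ici x hx hx
  linarith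

theorem add_two_div_mul_sqrt_le {φ : ℝ → ℝ} {a A B : ℝ} (hA : 0 < A) (hB : 0 < B)
    (hφ : ∀ x ∈ Ici a, DifferentiableAt ℝ φ x)
    (hlow : ∀ x ∈ Ici a, (√(A + B * (x - a)))⁻¹ ≤ deriv φ x) {x : ℝ} (hx : a ≤ x) :
    φ a + 2 / B * (√(A + B * (x - a)) - √A) ≤ φ x := by
  have hψ : ∀ y ∈ Ici a,
      HasDerivAt (fun y => 2 / B * √(A + B * (y - a))) (√(A + B * (y - a)))⁻¹ y := by
    intro y hy
    have hpos : 0 < A + B * (y - a) := by have : a ≤ y := hy; positivity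
    refine ((((hasDerivAt_id' y).sub_const a).const_mul B |>.const_add A |>.sqrt
      hpos.ne').const_mul (2 / B)).congr_deriv ?_
    field_simp
  have hmono : MonotoneOn (fun y => φ y - 2 / B * √(A + B * (y - a))) (Ici a) := by
    refine monotoneOn_of_deriv_nonneg (convex_Ici a) (fun y hy => ?_) (fun y hy => ?_)
      (fun y hy => ?_)
    · exact ((hφ y hy).sub (hψ y hy).differentiableAt).continuousAt.continuousWithinAt
    · have hy := interior_subset hy
      exact ((hφ y hy).sub (hψ y hy).differentiableAt).differentiableWithinAt
    · have hy := interior_subset hy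
      rw [deriv_fun_sub (hφ y hy) (hψ y hy).differentiableAt, (hψ y hy).deriv]
      exact sub_nonneg.mpr (hlow y hy)
  have := hmono self_mem_Ici hx hx
  simp only [sub_self, mul_zero, add_zero] at this
  linarith

theorem inv_sqrt_le_of_inv_sq_le {t p : ℝ} (ht : 0 < t) (h : (t ^ 2)⁻¹ ≤ p) : (√p)⁻¹ ≤ t := by
  have hp : 0 < p := (by positivity : (0 : ℝ) < (t ^ 2)⁻¹).trans_le h
  rw [inv_le_comm₀ (Real.sqrt_pos.mpr hp) ht, ← Real.sqrt_sq ht.le, ← Real.sqrt_inv]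
  exact Real.sqrt_le_sqrt h

theorem tendsto_exp_neg_div_of_le {φ f s : ℝ → ℝ} {K κ : ℝ} (hκ : 0 < κ)
    (hs : Tendsto s atTop atTop) (hφ : ∀ᶠ x in atTop, K + κ * s x ≤ φ x)
    (hf : ∀ᶠ x in atTop, (s x)⁻¹ ≤ f x) :
    Tendsto (fun x => Real.exp (-φ x) / f x) atTop (𝓝 0) := by
  have hdecay : Tendsto (fun x => Real.exp (-K) * (s x * Real.exp (-κ * s x))) atTop (𝓝 0) := by
    simpa using ((tendsto_rpow_mul_exp_neg_mul_atTop_nhds_zero 1 κ hκ).comp hs).const_mul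
      (Real.exp (-K))
  refine squeeze_zero' ?_ ?_ hdecay <;>
    filter_upwards [hs.eventually_gt_atTop 0, hφ, hf] with x hsx hφx hfx
  · have : 0 < f x := (inv_pos.mpr hsx).trans_le hfx
    positivity
  · calc Real.exp (-φ x) / f x ≤ Real.exp (-(K + κ * s x)) * s x := by
          rw [div_eq_mul_inv]
          gcongr
          · exact (inv_pos.mpr ((inv_pos.mpr hsx).trans_le hfx)).le
          · exact inv_le_of_inv_le₀ hsx hfx
      _ = Real.exp (-K) * (s x * Real.exp (-κ * s x)) := by
          rw [neg_add, Real.exp_add, neg_mul]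
          ring

theorem tendsto_exp_neg_div_deriv_general (φ : ℝ → ℝ) (M₀ C : ℝ)
    (hC2 : ContDiffOn ℝ 2 φ (Ici M₀))
    (hder : ∀ x ∈ Ici M₀, 0 < deriv φ x)
    (hratio : ∀ x ∈ Ici M₀, |deriv (deriv φ) x / (deriv φ x) ^ 3| ≤ C) :
    Tendsto (fun x => Real.exp (-φ x) / deriv φ x) atTop (nhds 0) ∧
      Tendsto φ atTop atTop := by
  set a := M₀ + 1
  have ha : Ici a ⊆ Ioi M₀ := Ici_subset_Ioi.mpr (lt_add_one M₀)
  have hf_pos : ∀ x ∈ Ici a, 0 < deriv φ x := fun x hx => hder x (Ioi_subset_Ici_self (ha hx))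
  have hφ : ∀ x ∈ Ici a, DifferentiableAt ℝ φ x := fun x hx =>
    differentiableAt_of_deriv_ne_zero (hf_pos x hx).ne'
  have hf : ∀ x ∈ Ici a, DifferentiableAt ℝ (deriv φ) x := fun x hx =>
    ((hC2.mono Ioi_subset_Ici_self).deriv_of_isOpen isOpen_Ioi (m := 1) (by norm_num)
      |>.differentiableOn one_ne_zero).differentiableAt (isOpen_Ioi.mem_nhds (ha hx))
  have hC : 0 ≤ C := (abs_nonneg _).trans (hratio M₀ self_mem_Ici)
  set A := (deriv φ a ^ 2)⁻¹
  -- `C + 1` rather than `C`, so that the slope is positive even when `C = 0`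
  set B := 2 * (C + 1)
  have hA : 0 < A := by have := hf_pos a self_mem_Ici; positivity
  have hf_low : ∀ x ∈ Ici a, (√(A + B * (x - a)))⁻¹ ≤ deriv φ x := by
    intro x hx
    refine inv_sqrt_le_of_inv_sq_le (hf_pos x hx) ?_
    calc (deriv φ x ^ 2)⁻¹ ≤ A + 2 * C * (x - a) :=
          inv_sq_le_of_abs_deriv_div_cube_le hf (fun y hy => (hf_pos y hy).ne')
            (fun y hy => hratio y (Ioi_subset_Ici_self (ha hy))) hx
      _ ≤ A + B * (x - a) := by have : a ≤ x := hx; gcongr; linarith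
  have hs : Tendsto (fun x => √(A + B * (x - a))) atTop atTop :=
    Real.tendsto_sqrt_atTop.comp <| tendsto_atTop_add_const_left _ A <|
      (tendsto_atTop_add_const_right _ (-a) tendsto_id).const_mul_atTop (by positivity)
  have hφ_low : ∀ᶠ x in atTop, φ a - 2 / B * √A + 2 / B * √(A + B * (x - a)) ≤ φ x := by
    filter_upwards [eventually_ge_atTop a] with x hx
    linarith [add_two_div_mul_sqrt_le hA (by positivity) hφ hf_low hx]
  refine ⟨tendsto_exp_neg_div_of_le (by positivity) hs hφ_low
    (eventually_atTop.mpr ⟨a, hf_low⟩), ?_⟩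
  exact tendsto_atTop_mono' _ hφ_low
    (tendsto_atTop_add_const_left _ _ (hs.const_mul_atTop (by positivity)))

/-- If `φ` is `C²` on `[M₀, ∞)`, positive with `φ' > 0` there, and `|φ''/(φ')³| ≤ C`
on `[M₀, ∞)`, then `e^{-φ(x)}/φ'(x) → 0` and `φ(x) → +∞` as `x → ∞`. -/
theorem tendsto_exp_neg_div_deriv (φ : ℝ → ℝ) (M₀ C : ℝ)
    (hC2 : ContDiffOn ℝ 2 φ (Ici M₀))
    (hpos : ∀ x ∈ Ici M₀, 0 < φ x)
    (hder : ∀ x ∈ Ici M₀, 0 < deriv φ x)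
    (hratio : ∀ x ∈ Ici M₀, |deriv (deriv φ) x / (deriv φ x) ^ 3| ≤ C) :
    Tendsto (fun x => Real.exp (-φ x) / deriv φ x) atTop (nhds 0) ∧
      Tendsto φ atTop atTop :=
  tendsto_exp_neg_div_deriv_general φ M₀ C hC2 hder hratio
end

section
/- Let p > 3 be prime. Every nontrivial irreducible complex representation of SL₂(𝔽_p) has dimension at least (p−1)/2. -/
/-!
Let `u = !![1, 1; 0, 1]` and `f = ρ u`, so that `f ^ p = 1`. Since `SL₂` of a field is generated by
the transvections, each conjugate to a power of `u`, a nontrivial `ρ` has `f ≠ 1`; as `f` is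
diagonalisable, it has an eigenvalue `ζ ≠ 1`, a primitive `p`-th root of unity. Conjugating `u` by
`diag(a, a⁻¹)` gives `u ^ (a²)`, so every `ζ ^ (a²)` with `a ∈ 𝔽_p^×` is an eigenvalue of `f`, and
these are `(p - 1)/2` distinct numbers.
-/

open Matrix.SpecialLinearGroup Polynomial Finset
open scoped MatrixGroups commutatorElement

namespace Module.End

variable {K V : Type*} [Field K] [AddCommGroup V] [Module K V]

theorem HasEigenvalue.pow_eq_one {f : End K V} {μ : K} {n : ℕ} (hμ : f.HasEigenvalue μ)
    (hf : f ^ n = 1) : μ ^ n = 1 := by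
  obtain ⟨v, hv⟩ := hμ.exists_hasEigenvector
  have hvn : (μ ^ n - 1) • v = 0 := by
    rw [sub_smul, one_smul, ← hv.pow_apply, hf, one_apply, sub_self]
  exact sub_eq_zero.1 ((smul_eq_zero.1 hvn).resolve_right hv.2)

variable [FiniteDimensional K V]

theorem card_le_finrank_of_forall_hasEigenvalue (f : End K V) (s : Finset K)
    (hs : ∀ μ ∈ s, f.HasEigenvalue μ) : #s ≤ finrank K V := by
  classical
  have hroots : s ⊆ f.charpoly.roots.toFinset := fun μ hμ =>
    Multiset.mem_toFinset.2 <| (mem_roots f.charpoly_monic.ne_zero).2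
      ((hasEigenvalue_iff_isRoot_charpoly f μ).1 (hs μ hμ))
  calc #s ≤ #f.charpoly.roots.toFinset := card_le_card hroots
    _ ≤ Multiset.card f.charpoly.roots := Multiset.toFinset_card_le _
    _ ≤ f.charpoly.natDegree := card_roots' _
    _ = finrank K V := f.charpoly_natDegree

theorem exists_hasEigenvalue_ne_one_of_pow_eq_one [IsAlgClosed K] {f : End K V} {n : ℕ}
    (hn : (n : K) ≠ 0) (hf : f ^ n = 1) (hf1 : f ≠ 1) :
    ∃ μ, f.HasEigenvalue μ ∧ μ ≠ 1 := by
  by_contra! h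
  have hsemisimple : (f - (1 : K) • LinearMap.id).IsSemisimple := by
    refine (isSemisimple_sub_algebraMap_iff (μ := 1)).2 ?_
    refine isSemisimple_of_squarefree_aeval_eq_zero
      (separable_X_pow_sub_C 1 hn one_ne_zero).squarefree ?_
    simp [hf]
  refine hf1 (sub_eq_zero.1 ?_)
  simpa [← one_eq_id] using (hsemisimple.eq_zero_iff_forall_eigenvalue).2
    fun μ hμ => by simpa using h _ (hasEigenvalue_sub_iff.1 hμ)

end Module.End

theorem MonoidHom.hasEigenvalue_conj_iff {K V G : Type*} [Field K] [AddCommGroup V] [Module K V]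
    [FiniteDimensional K V] [Group G] (ρ : G →* Module.End K V) (g h : G) (μ : K) :
    (ρ (g * h * g⁻¹)).HasEigenvalue μ ↔ (ρ h).HasEigenvalue μ := by
  rw [Module.End.hasEigenvalue_iff_mem_spectrum, Module.End.hasEigenvalue_iff_mem_spectrum,
    map_mul, map_mul, ← spectrum.units_conjugate (u := ρ.toHomUnits g) (a := ρ h), ← map_inv,
    MonoidHom.coe_toHomUnits, MonoidHom.coe_toHomUnits]

namespace Matrix.SpecialLinearGroup

theorem transvection_natCast {ι R : Type*} [Fintype ι] [DecidableEq ι]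
    [CommRing R] {i j : ι} (hij : i ≠ j) (n : ℕ) :
    transvection hij (n : R) = transvection hij 1 ^ n := by
  induction n with
  | zero => simp [transvection_coeff_zero]
  | succ n ih => rw [Nat.cast_succ, transvection_add, ih, pow_succ]

variable {F : Type*} [Field F]

theorem diag2_mul_transvection_mul_inv (a : F) (ha : a ≠ 0) (t : F) :
    diag2 a ha * transvection zero_ne_one t * (diag2 a ha)⁻¹ =
      transvection zero_ne_one (a ^ 2 * t) :=
  calc diag2 a ha * transvection zero_ne_one t * (diag2 a ha)⁻¹
      = ⁅diag2 a ha, transvection zero_ne_one t⁆ * transvection zero_ne_one t := by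
        rw [commutatorElement_def, inv_mul_cancel_right]
    _ = transvection zero_ne_one (a ^ 2 * t) := by
        rw [Matrix.commutator_diag2_transvection a ha t _ rfl, ← transvection_add]
        ring_nf

theorem SL2_monoidHom_eq_one_of_map_transvection {M : Type*} [Monoid M] (ρ : SL(2, F) →* M)
    (h : ∀ t : F, ρ (transvection zero_ne_one t) = 1) : ρ = 1 := by
  let w : SL(2, F) := ⟨!![0, 1; -1, 0], by simp [Matrix.det_fin_two_of]⟩
  have hw (t : F) : w * transvection zero_ne_one t = transvection one_ne_zero (-t) * w := by
    refine Matrix.SpecialLinearGroup.ext _ _ fun i j => ?_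
    rw [coe_mul, coe_mul]
    fin_cases i <;> fin_cases j <;>
      simp [w, transvection_coe, Matrix.mul_apply, Fin.sum_univ_two, Matrix.one_apply]
  have hlower (t : F) : ρ (transvection one_ne_zero t) = 1 := by
    refine ((Group.isUnit w).map ρ).mul_left_inj.1 ?_
    rw [← map_mul, ← neg_neg t, ← hw, map_mul, h, mul_one, one_mul]
  refine MonoidHom.ext fun g => Matrix.SL2.transvection_induction (fun g => ρ g = 1) ?_
    (fun A B hA hB => by rw [map_mul, hA, hB, one_mul]) g
  intro i j hij c
  fin_cases i
  · obtain rfl : j = 1 := by fin_cases j <;> tauto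
    exact h c
  · obtain rfl : j = 0 := by fin_cases j <;> tauto
    exact hlower c

end Matrix.SpecialLinearGroup

theorem card_units_le_two_mul_card_image_sq (F : Type*) [Field F] [Fintype F] [DecidableEq F] :
    Fintype.card Fˣ ≤ 2 * #(univ.image fun a : Fˣ => (a : F) ^ 2) := by
  rw [← card_univ]
  refine card_le_mul_card_image _ 2 fun b hb => ?_
  obtain ⟨c, -, rfl⟩ := mem_image.1 hb
  calc _ ≤ #{c, -c} := card_le_card fun a ha => by
        rcases sq_eq_sq_iff_eq_or_eq_neg.1 (mem_filter.1 ha).2 with h | h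
        · simp [Units.ext h]
        · simp [Units.ext (h.trans (Units.val_neg c).symm)]
    _ ≤ 2 := card_le_two

theorem ZMod.transvection_eq_pow_val {ι : Type*} [Fintype ι] [DecidableEq ι] {p : ℕ} [NeZero p]
    {i j : ι} (hij : i ≠ j) (t : ZMod p) :
    transvection hij t = transvection hij 1 ^ t.val := by
  rw [← transvection_natCast, ZMod.natCast_zmod_val]

theorem hasEigenvalue_transvection_pow_val_sq {p : ℕ} [Fact p.Prime] {K V : Type*} [Field K]
    [AddCommGroup V] [Module K V] [FiniteDimensional K V] (ρ : SL(2, ZMod p) →* Module.End K V)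
    {ζ : K}
    (hζ : (ρ (transvection zero_ne_one 1)).HasEigenvalue ζ) (a : (ZMod p)ˣ) :
    (ρ (transvection zero_ne_one 1)).HasEigenvalue (ζ ^ ((a : ZMod p) ^ 2).val) := by
  have hconj := ρ.hasEigenvalue_conj_iff (diag2 (a : ZMod p) a.ne_zero)
    (transvection zero_ne_one 1) (ζ ^ ((a : ZMod p) ^ 2).val)
  rw [diag2_mul_transvection_mul_inv, mul_one, ZMod.transvection_eq_pow_val, map_pow] at hconj
  exact hconj.1 (hζ.pow _)

open CategoryTheory

theorem frobenius_dim_bound_general (p : ℕ) [Fact p.Prime]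
    (V : FDRep ℂ (Matrix.SpecialLinearGroup (Fin 2) (ZMod p)))
    (hnontriv : ∃ g, V.ρ g ≠ 1) :
    ((p : ℝ) - 1) / 2 ≤ (Module.finrank ℂ V : ℝ) := by
  have hp : p.Prime := Fact.out
  set f : Module.End ℂ V := V.ρ (transvection zero_ne_one 1)
  have hf1 : f ≠ 1 := by
    obtain ⟨g, hg⟩ := hnontriv
    refine fun hf => hg <| DFunLike.congr_fun (SL2_monoidHom_eq_one_of_map_transvection V.ρ
      fun t => ?_) g
    rw [ZMod.transvection_eq_pow_val, map_pow]
    exact (congrArg (· ^ t.val) hf).trans (one_pow _)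
  have hfp : f ^ p = 1 := by
    rw [← map_pow, ← transvection_natCast, ZMod.natCast_self, transvection_coeff_zero, map_one]
  obtain ⟨ζ, hζ, hζ1⟩ := Module.End.exists_hasEigenvalue_ne_one_of_pow_eq_one
    (Nat.cast_ne_zero.2 hp.ne_zero) hfp hf1
  have hprim : IsPrimitiveRoot ζ p :=
    IsPrimitiveRoot.iff_orderOf.2 (orderOf_eq_prime (hζ.pow_eq_one hfp) hζ1)
  have hinj : Function.Injective fun t : ZMod p => ζ ^ t.val := fun s t hst =>
    ZMod.val_injective p (hprim.pow_inj (ZMod.val_lt s) (ZMod.val_lt t) hst)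
  set squares := univ.image fun a : (ZMod p)ˣ => (a : ZMod p) ^ 2
  have hdim := f.card_le_finrank_of_forall_hasEigenvalue (squares.image fun t => ζ ^ t.val) <| by
    simpa [squares] using hasEigenvalue_transvection_pow_val_sq V.ρ hζ
  rw [card_image_of_injective _ hinj] at hdim
  have hsq : p - 1 ≤ 2 * #squares := ZMod.card_units p ▸ card_units_le_two_mul_card_image_sq _
  have hcount : ((p - 1 : ℕ) : ℝ) ≤ 2 * Module.finrank ℂ V := by
    exact_mod_cast hsq.trans (by omega)
  rw [Nat.cast_sub hp.one_le, Nat.cast_one] at hcount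
  linarith

/-- Frobenius: for `p > 3` prime, every nontrivial irreducible complex representation of
`SL₂(𝔽_p)` has dimension at least `(p − 1)/2`. -/
theorem frobenius_dim_bound (p : ℕ) (hp : p.Prime) (hp3 : 3 < p) [Fact p.Prime]
    (V : FDRep ℂ (Matrix.SpecialLinearGroup (Fin 2) (ZMod p))) [Simple V]
    (hnontriv : ∃ g, V.ρ g ≠ 1) :
    ((p : ℝ) - 1) / 2 ≤ (Module.finrank ℂ V : ℝ) :=
  frobenius_dim_bound_general p V hnontriv
end
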